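/- Let d ≥ 2 and let Δ be a pure d-dimensional flag-no-square simplicial complex in which every (d−1)-dimensional face is contained in at least two facets. Then the number of facets satisfies f_d(Δ) > 5^{2^{d−1}} / ∏_{i=0}^{d−2} (d+1−i)^{2^i}. -/

import Mathlib

open Finset

variable {V : Type} [DecidableEq V] [Fintype V]

/-- `K` is (the set of faces of) an abstract simplicial complex on `V`:
nonempty (contains the empty face) and closed under taking subsets. -/
def IsComplex (K : Finset (Finset V)) : Prop :=
  ∅ ∈ K ∧ ∀ σ ∈ K, ∀ τ ⊆ σ, τ ∈ K

/-- The facets (maximal faces) of `K`. -/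
def facets (K : Finset (Finset V)) : Finset (Finset V) :=
  K.filter fun σ => ∀ τ ∈ K, σ ⊆ τ → τ = σ

/-- `K` is pure `d`-dimensional: every facet has `d + 1` vertices. -/
def IsPure (K : Finset (Finset V)) (d : ℕ) : Prop :=
  ∀ σ ∈ facets K, σ.card = d + 1

/-- `fNum K i` is the number of `i`-dimensional faces (faces with `i + 1` vertices). -/
def fNum (K : Finset (Finset V)) (i : ℕ) : ℕ :=
  (K.filter fun σ => σ.card = i + 1).card

/-- `K` is flag: every set of vertices of `K` that are pairwise joined by
edges of `K` is a face of `K`. -/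
def IsFlag (K : Finset (Finset V)) : Prop :=
  ∀ τ : Finset V, (∀ v ∈ τ, ({v} : Finset V) ∈ K) →
    (∀ u ∈ τ, ∀ w ∈ τ, u ≠ w → ({u, w} : Finset V) ∈ K) → τ ∈ K

/-- `K` has no induced 4-cycle: there are no four distinct vertices `a b c d`
with `ab, bc, cd, da` faces and `ac, bd` non-faces. -/
def NoSquare (K : Finset (Finset V)) : Prop :=
  ¬ ∃ a b c d : V, ({a, b, c, d} : Finset V).card = 4 ∧
    ({a, b} : Finset V) ∈ K ∧ ({b, c} : Finset V) ∈ K ∧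
    ({c, d} : Finset V) ∈ K ∧ ({d, a} : Finset V) ∈ K ∧
    ({a, c} : Finset V) ∉ K ∧ ({b, d} : Finset V) ∉ K

/-- Every face with `d` vertices (i.e. of dimension `d - 1`) is contained in
at least two facets. -/
def NoFree (K : Finset (Finset V)) (d : ℕ) : Prop :=
  ∀ σ ∈ K, σ.card = d → 2 ≤ ((facets K).filter fun F => σ ⊆ F).card

/-- The link of a face `σ`. -/
def link (K : Finset (Finset V)) (σ : Finset V) : Finset (Finset V) :=
  K.filter fun τ => τ ∩ σ = ∅ ∧ τ ∪ σ ∈ K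

/-!
Every vertex link of such a complex is again such a complex, one dimension lower, and its
facets correspond to the facets through the vertex. For a facet `F ∋ v`, the second facet
through the ridge `F \ {v}` brings in a vertex `w` not adjacent to `v`; the absence of induced
squares makes `F ↦ w` injective, so there are at least `deg v + d + 1` vertices. Double counting
vertex–facet incidences then turns a lower bound `m` on all vertex degrees into
`f_d ≥ m² / (d + 1) + m`. Starting from `f_1 ≥ 5` and applying this to the vertex links gives
the product formula by induction on the dimension.
-/

def vertices (K : Finset (Finset V)) : Finset V :=
  {v | ({v} : Finset V) ∈ K}

def facetsContaining (K : Finset (Finset V)) (v : V) : Finset (Finset V) :=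
  {F ∈ facets K | v ∈ F}

structure IsFlagNoSquareNoFree (K : Finset (Finset V)) (d : ℕ) : Prop where
  isComplex : IsComplex K
  isPure : IsPure K d
  isFlag : IsFlag K
  noSquare : NoSquare K
  noFree : NoFree K d

variable {K : Finset (Finset V)} {F F₁ F₂ S σ τ : Finset V} {u v w x y : V} {d k n : ℕ}

theorem mem_vertices : v ∈ vertices K ↔ ({v} : Finset V) ∈ K := by
  simp [vertices]

omit [Fintype V] [DecidableEq V] in
theorem IsComplex.mem_of_subset (hK : IsComplex K) (hσ : σ ∈ K) (hτσ : τ ⊆ σ) : τ ∈ K :=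
  hK.2 σ hσ τ hτσ

omit [Fintype V] in
theorem IsComplex.pair_mem (hK : IsComplex K) (hσ : σ ∈ K) (hx : x ∈ σ) (hy : y ∈ σ) :
    ({x, y} : Finset V) ∈ K :=
  hK.mem_of_subset hσ (insert_subset hx (singleton_subset_iff.2 hy))

theorem mem_of_mem_facets (hF : F ∈ facets K) : F ∈ K :=
  (mem_filter.1 hF).1

theorem eq_of_mem_facets_of_subset (hF : F ∈ facets K) (hτ : τ ∈ K) (hFτ : F ⊆ τ) : τ = F :=
  (mem_filter.1 hF).2 τ hτ hFτ

theorem exists_mem_facets_superset (hσ : σ ∈ K) : ∃ F ∈ facets K, σ ⊆ F := by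
  obtain ⟨F, hσF, hF⟩ := K.exists_le_maximal hσ
  exact ⟨F, mem_filter.2 ⟨hF.prop, fun τ hτ hFτ => (hF.eq_of_le hτ hFτ).symm⟩, hσF⟩

theorem mem_vertices_of_mem_facets (hK : IsComplex K) (hF : F ∈ facets K) (hv : v ∈ F) :
    v ∈ vertices K :=
  mem_vertices.2 (hK.mem_of_subset (mem_of_mem_facets hF) (singleton_subset_iff.2 hv))

theorem fNum_eq_card_facets (hpure : IsPure K d) : fNum K d = #(facets K) := by
  unfold fNum
  congr 1
  ext σ
  refine ⟨fun h => ?_, fun h => mem_filter.2 ⟨mem_of_mem_facets h, hpure σ h⟩⟩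
  obtain ⟨hσ, hcard⟩ := mem_filter.1 h
  obtain ⟨F, hF, hσF⟩ := exists_mem_facets_superset hσ
  rwa [eq_of_subset_of_card_le hσF (by rw [hcard, hpure F hF])]

theorem exists_vertex_mem_facets (hK : IsComplex K) (hpure : IsPure K d) :
    ∃ F ∈ facets K, ∃ v ∈ F, v ∈ vertices K := by
  obtain ⟨F, hF, -⟩ := exists_mem_facets_superset hK.1
  obtain ⟨v, hv⟩ : F.Nonempty := card_pos.1 (by rw [hpure F hF]; omega)
  exact ⟨F, hF, v, hv, mem_vertices_of_mem_facets hK hF hv⟩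

omit [Fintype V] in
theorem IsFlag.union_mem (hK : IsComplex K) (hflag : IsFlag K) (hσ : σ ∈ K) (hτ : τ ∈ K)
    (hστ : ∀ x ∈ σ, ∀ y ∈ τ, x ≠ y → ({x, y} : Finset V) ∈ K) : σ ∪ τ ∈ K := by
  refine hflag _ (fun u hu => ?_) fun x hx y hy hxy => ?_
  · rcases mem_union.1 hu with hu | hu
    exacts [hK.mem_of_subset hσ (singleton_subset_iff.2 hu),
      hK.mem_of_subset hτ (singleton_subset_iff.2 hu)]
  · rcases mem_union.1 hx with hx | hx <;> rcases mem_union.1 hy with hy | hy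
    · exact hK.pair_mem hσ hx hy
    · exact hστ x hx y hy hxy
    · rw [pair_comm]
      exact hστ y hy x hx hxy.symm
    · exact hK.pair_mem hτ hx hy

section Link

omit [Fintype V] in
theorem mem_link_singleton (hK : IsComplex K) :
    τ ∈ link K {v} ↔ v ∉ τ ∧ insert v τ ∈ K := by
  rw [link, mem_filter, ← disjoint_iff_inter_eq_empty, disjoint_singleton_right, union_comm,
    ← insert_eq]
  exact ⟨fun h => h.2, fun h => ⟨hK.mem_of_subset h.2 (subset_insert v τ), h⟩⟩

omit [Fintype V] in
theorem ne_of_singleton_mem_link (hK : IsComplex K) (hu : ({u} : Finset V) ∈ link K {v}) :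
    u ≠ v := by
  rintro rfl
  exact ((mem_link_singleton hK).1 hu).1 (mem_singleton_self u)

omit [Fintype V] in
theorem isComplex_link (hK : IsComplex K) (hv : ({v} : Finset V) ∈ K) :
    IsComplex (link K {v}) := by
  refine ⟨(mem_link_singleton hK).2 ⟨notMem_empty v, hv⟩, fun σ hσ τ hτσ => ?_⟩
  rw [mem_link_singleton hK] at hσ ⊢
  exact ⟨fun h => hσ.1 (hτσ h), hK.mem_of_subset hσ.2 (insert_subset_insert v hτσ)⟩

omit [Fintype V] in
theorem IsFlag.mem_link (hK : IsComplex K) (hflag : IsFlag K) (hv : ({v} : Finset V) ∈ K)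
    (hτ : τ ∈ K) (hvτ : v ∉ τ) (hτv : ∀ u ∈ τ, ({u} : Finset V) ∈ link K {v}) :
    τ ∈ link K {v} := by
  refine (mem_link_singleton hK).2 ⟨hvτ, hflag.union_mem hK hv hτ fun x hx y hy _ => ?_⟩
  rw [mem_singleton.1 hx]
  exact ((mem_link_singleton hK).1 (hτv y hy)).2

omit [Fintype V] in
theorem isFlag_link (hK : IsComplex K) (hflag : IsFlag K) (hv : ({v} : Finset V) ∈ K) :
    IsFlag (link K {v}) := by
  intro τ hτv hτe
  refine hflag.mem_link hK hv (hflag τ (fun u hu => ?_) fun u hu w hw huw => ?_)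
    (fun hvτ => ne_of_singleton_mem_link hK (hτv v hvτ) rfl) hτv
  exacts [filter_subset _ _ (hτv u hu), filter_subset _ _ (hτe u hu w hw huw)]

omit [Fintype V] in
theorem noSquare_link (hK : IsComplex K) (hflag : IsFlag K) (hv : ({v} : Finset V) ∈ K)
    (hns : NoSquare K) : NoSquare (link K {v}) := by
  rintro ⟨a, b, c, d, hcard, hab, hbc, hcd, hda, hac, hbd⟩
  have vertex : ∀ {x y : V}, ({x, y} : Finset V) ∈ link K {v} → ({y} : Finset V) ∈ link K {v} :=
    fun h => (isComplex_link hK hv).mem_of_subset h (by simp)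
  have nonedge : ∀ {x y : V}, ({x} : Finset V) ∈ link K {v} → ({y} : Finset V) ∈ link K {v} →
      ({x, y} : Finset V) ∉ link K {v} → ({x, y} : Finset V) ∉ K := by
    intro x y hx hy hxy hxyK
    refine hxy (hflag.mem_link hK hv hxyK ?_ ?_)
    · simp [(ne_of_singleton_mem_link hK hx).symm, (ne_of_singleton_mem_link hK hy).symm]
    · simp [hx, hy]
  exact hns ⟨a, b, c, d, hcard, filter_subset _ _ hab, filter_subset _ _ hbc,
    filter_subset _ _ hcd, filter_subset _ _ hda,
    nonedge (vertex hda) (vertex hbc) hac, nonedge (vertex hab) (vertex hcd) hbd⟩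

theorem mem_facets_link (hK : IsComplex K) :
    τ ∈ facets (link K {v}) ↔ v ∉ τ ∧ insert v τ ∈ facets K := by
  constructor
  · intro hτ
    obtain ⟨hvτ, hτK⟩ := (mem_link_singleton hK).1 (mem_of_mem_facets hτ)
    refine ⟨hvτ, mem_filter.2 ⟨hτK, fun ρ hρ hτρ => ?_⟩⟩
    have hvρ : v ∈ ρ := hτρ (mem_insert_self v τ)
    have hρ' : ρ.erase v ∈ link K {v} :=
      (mem_link_singleton hK).2 ⟨notMem_erase v ρ, by rwa [insert_erase hvρ]⟩
    have hτρ' : τ ⊆ ρ.erase v := erase_insert hvτ ▸ erase_subset_erase v hτρ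
    rw [← insert_erase hvρ, eq_of_mem_facets_of_subset hτ hρ' hτρ']
  · rintro ⟨hvτ, hF⟩
    refine mem_filter.2 ⟨(mem_link_singleton hK).2 ⟨hvτ, mem_of_mem_facets hF⟩, fun ρ hρ hτρ => ?_⟩
    obtain ⟨hvρ, hρK⟩ := (mem_link_singleton hK).1 hρ
    rw [← erase_insert hvρ, eq_of_mem_facets_of_subset hF hρK (insert_subset_insert v hτρ),
      erase_insert hvτ]

theorem card_filter_facets_link (hK : IsComplex K) (hvσ : v ∉ σ) :
    #{τ ∈ facets (link K {v}) | σ ⊆ τ} = #{F ∈ facets K | insert v σ ⊆ F} := by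
  refine card_bij' (fun τ _ => insert v τ) (fun F _ => F.erase v) (fun τ hτ => ?_)
    (fun F hF => ?_) (fun τ hτ => ?_) (fun F hF => ?_)
  · rw [mem_filter, mem_facets_link hK] at hτ
    exact mem_filter.2 ⟨hτ.1.2, insert_subset_insert v hτ.2⟩
  · rw [mem_filter] at hF
    have hvF : v ∈ F := hF.2 (mem_insert_self v σ)
    refine mem_filter.2 ⟨(mem_facets_link hK).2 ⟨notMem_erase v F, ?_⟩, ?_⟩
    · rw [insert_erase hvF]
      exact hF.1
    · exact erase_insert hvσ ▸ erase_subset_erase v hF.2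
  · exact erase_insert ((mem_facets_link hK).1 (mem_filter.1 hτ).1).1
  · exact insert_erase ((mem_filter.1 hF).2 (mem_insert_self v σ))

theorem card_facets_link (hK : IsComplex K) :
    #(facets (link K {v})) = #(facetsContaining K v) := by
  simpa [facetsContaining] using card_filter_facets_link (K := K) (v := v) hK (notMem_empty v)

theorem isPure_link (hK : IsComplex K) (hpure : IsPure K (d + 1)) : IsPure (link K {v}) d := by
  intro τ hτ
  obtain ⟨hvτ, hF⟩ := (mem_facets_link hK).1 hτ
  have := hpure _ hF
  rw [card_insert_of_notMem hvτ] at this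
  omega

theorem noFree_link (hK : IsComplex K) (hfree : NoFree K (d + 1)) : NoFree (link K {v}) d := by
  intro σ hσ hcard
  obtain ⟨hvσ, hσK⟩ := (mem_link_singleton hK).1 hσ
  rw [card_filter_facets_link hK hvσ]
  exact hfree _ hσK (by rw [card_insert_of_notMem hvσ, hcard])

theorem IsFlagNoSquareNoFree.link (hK : IsFlagNoSquareNoFree K (d + 1))
    (hv : ({v} : Finset V) ∈ K) : IsFlagNoSquareNoFree (link K {v}) d :=
  ⟨isComplex_link hK.isComplex hv, isPure_link hK.isComplex hK.isPure,
    isFlag_link hK.isComplex hK.isFlag hv, noSquare_link hK.isComplex hK.isFlag hv hK.noSquare,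
    noFree_link hK.isComplex hK.noFree⟩

end Link

section FarVertex

theorem exists_far_vertex (hK : IsComplex K) (hpure : IsPure K d) (hflag : IsFlag K)
    (hfree : NoFree K d) (hF : F ∈ facets K) (hvF : v ∈ F) :
    ∃ w, w ∉ F ∧ ({v, w} : Finset V) ∉ K ∧ insert w (F.erase v) ∈ facets K := by
  have hσK : F.erase v ∈ K := hK.mem_of_subset (mem_of_mem_facets hF) (erase_subset v F)
  have hσcard : #(F.erase v) = d := by rw [card_erase_of_mem hvF, hpure F hF, Nat.add_sub_cancel]
  obtain ⟨F', hF', hF'F⟩ := exists_mem_ne (hfree _ hσK hσcard) F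
  obtain ⟨hF', hσF'⟩ := mem_filter.1 hF'
  have hvF' : v ∉ F' := fun hv => hF'F <|
    eq_of_mem_facets_of_subset hF (mem_of_mem_facets hF') (insert_erase hvF ▸ insert_subset hv hσF')
  obtain ⟨w, hwF', hwσ⟩ := exists_mem_notMem_of_card_lt_card (s := F.erase v) (t := F')
    (by rw [hσcard, hpure F' hF']; omega)
  have hwF : w ∉ F := fun h => hwσ (mem_erase.2 ⟨fun hwv => hvF' (hwv ▸ hwF'), h⟩)
  have hF'eq : insert w (F.erase v) = F' :=
    eq_of_subset_of_card_le (insert_subset hwF' hσF')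
      (by rw [card_insert_of_notMem hwσ, hσcard, hpure F' hF'])
  refine ⟨w, hwF, fun hvw => hwF ?_, hF'eq ▸ hF'⟩
  -- `F ∪ {w}` would be a clique, hence a face strictly containing the facet `F`
  have hFw : F ∪ {w} ∈ K := by
    refine hflag.union_mem hK (mem_of_mem_facets hF)
      (hK.mem_of_subset (mem_of_mem_facets hF') (singleton_subset_iff.2 hwF')) fun x hx y hy _ => ?_
    rw [mem_singleton.1 hy]
    by_cases hxv : x = v
    · rwa [hxv]
    · exact hK.pair_mem (mem_of_mem_facets hF') (hσF' (mem_erase.2 ⟨hxv, hx⟩)) hwF'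
  rw [← eq_of_mem_facets_of_subset hF hFw subset_union_left]
  exact mem_union_right F (mem_singleton_self w)

theorem eq_of_far_vertex (hK : IsComplex K) (hflag : IsFlag K) (hns : NoSquare K)
    (hF₁ : F₁ ∈ facets K) (hF₂ : F₂ ∈ facets K) (hv₁ : v ∈ F₁) (hv₂ : v ∈ F₂)
    (hw₁ : w ∉ F₁) (hw₂ : w ∉ F₂) (hvw : ({v, w} : Finset V) ∉ K)
    (h₁ : insert w (F₁.erase v) ∈ K) (h₂ : insert w (F₂.erase v) ∈ K) : F₁ = F₂ := by
  have hK₁ := mem_of_mem_facets hF₁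
  have hK₂ := mem_of_mem_facets hF₂
  have hvw' : v ≠ w := by
    rintro rfl
    exact hvw (hK.pair_mem hK₁ hv₁ hv₁)
  -- a non-edge `xy` would close the induced square `v x w y`
  have hcross : ∀ x ∈ F₁.erase v, ∀ y ∈ F₂.erase v, x ≠ y → ({x, y} : Finset V) ∈ K := by
    intro x hx y hy hxy
    by_contra hxyK
    obtain ⟨hxv, hx⟩ := mem_erase.1 hx
    obtain ⟨hyv, hy⟩ := mem_erase.1 hy
    refine hns ⟨v, x, w, y, card_eq_four.2 ⟨v, x, w, y, hxv.symm, hvw', hyv.symm,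
      fun h => hw₁ (h ▸ hx), hxy, fun h => hw₂ (h ▸ hy), rfl⟩,
      hK.pair_mem hK₁ hv₁ hx, ?_, ?_, hK.pair_mem hK₂ hy hv₂, hvw, hxyK⟩
    · exact hK.pair_mem h₁ (mem_insert_of_mem (mem_erase.2 ⟨hxv, hx⟩)) (mem_insert_self w _)
    · exact hK.pair_mem h₂ (mem_insert_self w _) (mem_insert_of_mem (mem_erase.2 ⟨hyv, hy⟩))
  have hunion : F₁ ∪ F₂.erase v ∈ K := by
    refine hflag.union_mem hK hK₁ (hK.mem_of_subset hK₂ (erase_subset v F₂))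
      fun x hx y hy hxy => ?_
    by_cases hxv : x = v
    · rw [hxv]
      exact hK.pair_mem hK₂ hv₂ (mem_of_mem_erase hy)
    · exact hcross x (mem_erase.2 ⟨hxv, hx⟩) y hy hxy
  have hF₂F₁ : F₂.erase v ⊆ F₁ := by
    rw [← eq_of_mem_facets_of_subset hF₁ hunion subset_union_left]
    exact subset_union_right
  exact eq_of_mem_facets_of_subset hF₂ hK₁ (insert_erase hv₂ ▸ insert_subset hv₁ hF₂F₁)

theorem card_facetsContaining_le (hK : IsFlagNoSquareNoFree K d) (v : V) :
    #(facetsContaining K v) ≤ #{w ∈ vertices K | ({v, w} : Finset V) ∉ K} := by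
  have hfar : ∀ F ∈ facetsContaining K v,
      ∃ w, w ∉ F ∧ ({v, w} : Finset V) ∉ K ∧ insert w (F.erase v) ∈ facets K := fun F hF =>
    exists_far_vertex hK.isComplex hK.isPure hK.isFlag hK.noFree (mem_filter.1 hF).1
      (mem_filter.1 hF).2
  have : Nonempty V := ⟨v⟩
  choose! far hfar using hfar
  refine card_le_card_of_injOn far (fun F hF => ?_) fun F₁ hF₁ F₂ hF₂ h => ?_
  · obtain ⟨-, hvw, hfacet⟩ := hfar F hF
    exact mem_filter.2 ⟨mem_vertices_of_mem_facets hK.isComplex hfacet (mem_insert_self _ _), hvw⟩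
  · obtain ⟨hw₁, hvw, h₁⟩ := hfar F₁ hF₁
    obtain ⟨hw₂, -, h₂⟩ := hfar F₂ hF₂
    rw [h] at hw₁ hvw h₁
    exact eq_of_far_vertex hK.isComplex hK.isFlag hK.noSquare (mem_filter.1 hF₁).1
      (mem_filter.1 hF₂).1 (mem_filter.1 hF₁).2 (mem_filter.1 hF₂).2 hw₁ hw₂ hvw
      (mem_of_mem_facets h₁) (mem_of_mem_facets h₂)

theorem card_facetsContaining_add_card_le (hK : IsFlagNoSquareNoFree K d)
    (hS : ∀ s ∈ S, ({v, s} : Finset V) ∈ K) :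
    #(facetsContaining K v) + #S ≤ #(vertices K) := by
  have hdisj : Disjoint {w ∈ vertices K | ({v, w} : Finset V) ∉ K} S :=
    disjoint_left.2 fun w hw hwS => (mem_filter.1 hw).2 (hS w hwS)
  have hsub : {w ∈ vertices K | ({v, w} : Finset V) ∉ K} ∪ S ⊆ vertices K :=
    union_subset (filter_subset _ _) fun s hs =>
      mem_vertices.2 (hK.isComplex.mem_of_subset (hS s hs) (by simp))
  calc #(facetsContaining K v) + #S
      ≤ #{w ∈ vertices K | ({v, w} : Finset V) ∉ K} + #S :=
        Nat.add_le_add_right (card_facetsContaining_le hK v) _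
    _ = #({w ∈ vertices K | ({v, w} : Finset V) ∉ K} ∪ S) := (card_union_of_disjoint hdisj).symm
    _ ≤ #(vertices K) := card_le_card hsub

end FarVertex

theorem card_vertices_mul_le (hpure : IsPure K d)
    (hk : ∀ u ∈ vertices K, k ≤ #(facetsContaining K u)) :
    #(vertices K) * k ≤ (d + 1) * #(facets K) :=
  calc #(vertices K) * k ≤ ∑ F ∈ facets K, #(vertices K ∩ F) := le_sum_card_inter hk
    _ ≤ ∑ _F ∈ facets K, (d + 1) :=
      sum_le_sum fun F hF => (card_le_card inter_subset_right).trans (hpure F hF).le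
    _ = (d + 1) * #(facets K) := by rw [sum_const, smul_eq_mul, mul_comm]

theorem mul_add_le_card_facets (hK : IsFlagNoSquareNoFree K d)
    (hk : ∀ u ∈ vertices K, k ≤ #(facetsContaining K u)) :
    k * (k + (d + 1)) ≤ (d + 1) * #(facets K) := by
  obtain ⟨F, hF, v, hvF, hv⟩ := exists_vertex_mem_facets hK.isComplex hK.isPure
  have hN := card_facetsContaining_add_card_le hK fun s hs =>
    hK.isComplex.pair_mem (mem_of_mem_facets hF) hvF hs
  rw [hK.isPure F hF] at hN
  calc k * (k + (d + 1)) ≤ k * #(vertices K) := Nat.mul_le_mul_left k (by linarith [hk v hv])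
    _ = #(vertices K) * k := mul_comm _ _
    _ ≤ (d + 1) * #(facets K) := card_vertices_mul_le hK.isPure hk

-- All degrees are `≥ 2`, so `f₁ ≥ #vertices ≥ deg v + #(E₁ ∪ E₂) ≥ 5` for edges `E₁ ≠ E₂` at `v`.
theorem five_le_card_facets (hK : IsFlagNoSquareNoFree K 1) : 5 ≤ #(facets K) := by
  have hdeg : ∀ u ∈ vertices K, 2 ≤ #(facetsContaining K u) := fun u hu => by
    simpa [facetsContaining] using hK.noFree {u} (mem_vertices.1 hu) (card_singleton u)
  obtain ⟨E₁, hE₁, v, hvE₁, hv⟩ := exists_vertex_mem_facets hK.isComplex hK.isPure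
  obtain ⟨E₂, hE₂, hE₂E₁⟩ := exists_mem_ne (hdeg v hv) E₁
  obtain ⟨hE₂, hvE₂⟩ := mem_filter.1 hE₂
  have hS : ∀ s ∈ E₁ ∪ E₂, ({v, s} : Finset V) ∈ K := fun s hs => by
    rcases mem_union.1 hs with hs | hs
    exacts [hK.isComplex.pair_mem (mem_of_mem_facets hE₁) hvE₁ hs,
      hK.isComplex.pair_mem (mem_of_mem_facets hE₂) hvE₂ hs]
  have hssub : E₁ ⊂ E₁ ∪ E₂ := by
    refine Finset.ssubset_iff_subset_ne.2 ⟨subset_union_left, fun h => hE₂E₁ ?_⟩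
    refine (eq_of_mem_facets_of_subset hE₂ (mem_of_mem_facets hE₁) ?_).symm
    rw [h]
    exact subset_union_right
  have h3 := card_lt_card hssub
  rw [hK.isPure E₁ hE₁] at h3
  have hN := card_facetsContaining_add_card_le hK hS
  have hcount := card_vertices_mul_le hK.isPure hdeg
  have := hdeg v hv
  omega

-- `facetBound n` is the bound for complexes of dimension `n + 1`.
noncomputable def facetBound : ℕ → ℝ
  | 0 => 5
  | n + 1 => facetBound n ^ 2 / (n + 3)

theorem facetBound_pos (n : ℕ) : 0 < facetBound n := by
  induction n with
  | zero => norm_num [facetBound]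
  | succ n ih => rw [facetBound]; positivity

theorem facetBound_eq (n : ℕ) :
    facetBound n = 5 ^ 2 ^ n / ∏ i ∈ range n, ((n + 2 - i : ℕ) : ℝ) ^ 2 ^ i := by
  induction n with
  | zero => simp [facetBound]
  | succ n ih =>
    have hprod : ∏ i ∈ range (n + 1), ((n + 1 + 2 - i : ℕ) : ℝ) ^ 2 ^ i
        = (∏ i ∈ range n, ((n + 2 - i : ℕ) : ℝ) ^ 2 ^ i) ^ 2 * (n + 3) := by
      rw [prod_range_succ', ← prod_pow]
      congr 1
      · refine prod_congr rfl fun i _ => ?_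
        rw [show n + 1 + 2 - (i + 1) = n + 2 - i by omega, ← pow_mul, pow_succ]
      · push_cast
        ring
    rw [facetBound, ih, hprod, div_pow, ← pow_mul, ← pow_succ, div_div]

theorem facetBound_succ_add_le (hK : IsFlagNoSquareNoFree K (n + 2))
    (hlink : ∀ v ∈ vertices K, facetBound n ≤ #(facets (link K {v}))) :
    facetBound (n + 1) + facetBound n ≤ #(facets K) := by
  set m := facetBound n
  have hk : ∀ u ∈ vertices K, ⌈m⌉₊ ≤ #(facetsContaining K u) := fun u hu =>
    Nat.ceil_le.2 (card_facets_link (v := u) hK.isComplex ▸ hlink u hu)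
  have hcount : (⌈m⌉₊ * (⌈m⌉₊ + (n + 3)) : ℝ) ≤ (n + 3) * #(facets K) := by
    exact_mod_cast mul_add_le_card_facets hK hk
  have hm : 0 < m := facetBound_pos n
  have hmk : m ≤ ⌈m⌉₊ := Nat.le_ceil m
  rw [facetBound, div_add' _ _ _ (by positivity), div_le_iff₀ (by positivity)]
  nlinarith

theorem facetBound_le_card_facets :
    ∀ {n : ℕ} {K : Finset (Finset V)}, IsFlagNoSquareNoFree K (n + 1) → facetBound n ≤ #(facets K)
  | 0, _, hK => by
    rw [facetBound]
    exact_mod_cast five_le_card_facets hK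
  | n + 1, _, hK =>
    (facetBound_succ_add_le hK fun _ hv =>
        facetBound_le_card_facets (hK.link (mem_vertices.1 hv))).trans'
      (le_add_of_nonneg_right (facetBound_pos n).le)

theorem facets_lower_bound_product_general {V : Type} [DecidableEq V] [Fintype V]
    (d : ℕ) (hd : 2 ≤ d) (K : Finset (Finset V))
    (hK : IsComplex K)
    (hpure : IsPure K d) (hflag : IsFlag K) (hns : NoSquare K)
    (hfree : NoFree K d) :
    (5 : ℝ) ^ 2 ^ (d - 1) / ∏ i ∈ Finset.range (d - 1), ((d + 1 - i : ℕ) : ℝ) ^ 2 ^ i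
      < (fNum K d : ℝ) := by
  obtain ⟨n, rfl⟩ : ∃ n, d = n + 2 := ⟨d - 2, by omega⟩
  have hK' : IsFlagNoSquareNoFree K (n + 2) := ⟨hK, hpure, hflag, hns, hfree⟩
  have hbound : facetBound (n + 1) + facetBound n ≤ #(facets K) :=
    facetBound_succ_add_le hK' fun _ hv => facetBound_le_card_facets (hK'.link (mem_vertices.1 hv))
  have hclosed : facetBound (n + 1)
      = 5 ^ 2 ^ (n + 2 - 1) / ∏ i ∈ range (n + 2 - 1), ((n + 2 + 1 - i : ℕ) : ℝ) ^ 2 ^ i := by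
    rw [facetBound_eq]
    rfl
  rw [fNum_eq_card_facets hpure, ← hclosed]
  linarith [facetBound_pos n]

/-- A pure `d`-dimensional (`d ≥ 2`) flag-no-square simplicial complex with no
free `(d-1)`-faces has more than `5 ^ (2 ^ (d-1)) / ∏_{i=0}^{d-2} (d+1-i) ^ (2 ^ i)`
facets. -/
theorem facets_lower_bound_product {V : Type} [DecidableEq V] [Fintype V]
    (d : ℕ) (hd : 2 ≤ d) (K : Finset (Finset V))
    (hK : IsComplex K) (hvert : ∀ v : V, ({v} : Finset V) ∈ K)
    (hpure : IsPure K d) (hflag : IsFlag K) (hns : NoSquare K)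
    (hfree : NoFree K d) :
    (5 : ℝ) ^ 2 ^ (d - 1) / ∏ i ∈ Finset.range (d - 1), ((d + 1 - i : ℕ) : ℝ) ^ 2 ^ i
      < (fNum K d : ℝ) :=
  facets_lower_bound_product_general d hd K hK hpure hflag hns hfree
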